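/- arXiv:1009.2591 — 2 statements merged into one kernel-verified Lean document; each statement's English description precedes it below -/
import Mathlib

section
/- In the instance with people A = {a1, a2, a3} and items B = {b1, b2, b3}, where every person ai ranks b1 first, b2 second, and b3 third, no matching is popular: for every matching M between A and B there exists another matching M' such that strictly more people prefer M' to M than prefer M to M'. -/
/-- A matching assigns to each person at most one item, injectively on items. -/
def IsMatching {α β : Type*} (M : α → Option β) : Prop :=
  ∀ a a' b, M a = some b → M a' = some b → a = a'

/-- Person `a` prefers matching `M` to `M'`: matched in `M` and unmatched in `M'`,
or matched in both with strictly smaller rank in `M`. -/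
def Prefers {α β : Type*} (rank : α → β → ℕ∞) (M M' : α → Option β) (a : α) : Prop :=
  (∃ b, M a = some b ∧ M' a = none) ∨
  (∃ b b', M a = some b ∧ M' a = some b' ∧ rank a b < rank a b')

/-- `M'` is more popular than `M`. -/
def MorePopular {α β : Type*} (rank : α → β → ℕ∞) (M' M : α → Option β) : Prop :=
  Nat.card {a // Prefers rank M M' a} < Nat.card {a // Prefers rank M' M a}

/-- The instance on people a1,a2,a3 and items b1,b2,b3 where every person ranks
b1 first, b2 second and b3 third (item `b` has rank `b`). -/
def rank3 : Fin 3 → Fin 3 → ℕ∞ := fun _ b => ((b : ℕ) : ℕ∞)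

/-!
With a common ranking of the items and at most as many people as items, every matching is beaten.
If someone is unmatched, some item is free, and handing it to them makes one person better off and
nobody worse off. If everyone is matched, move each person one item up the ranking, so that whoever
holds the top item is left unmatched: with at least three people, at least two gain and one loses.
-/

open Function

section General

variable {α β : Type*} {rank : α → β → ℕ∞} {M M' : α → Option β}

lemma morePopular_iff_ncard :
    MorePopular rank M' M ↔
      {a | Prefers rank M M' a}.ncard < {a | Prefers rank M' M a}.ncard :=
  Iff.rfl

lemma not_prefers_of_eq {a : α} (h : M a = M' a) : ¬ Prefers rank M M' a := by
  rintro (⟨b, hb, hb'⟩ | ⟨b, b', hb, hb', hlt⟩)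
  · simp [← h, hb] at hb'
  · rw [← h, hb, Option.some_inj] at hb'
    exact (hb' ▸ hlt).false

lemma exists_free_item_of_eq_none [Finite α] [Finite β] (hcard : Nat.card α ≤ Nat.card β)
    {a : α} (ha : M a = none) : ∃ b, ∀ a', M a' ≠ some b := by
  by_contra! hfull
  choose g hg using hfull
  have hg_inj : Injective g := fun b b' h =>
    Option.some_injective _ ((hg b).symm.trans (h ▸ hg b'))
  obtain ⟨b, rfl⟩ := (hg_inj.bijective_of_nat_card_le hcard).surjective a
  simp [hg] at ha

lemma IsMatching.update_some [DecidableEq α] (hM : IsMatching M) (a : α) {b : β}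
    (hb : ∀ a', M a' ≠ some b) : IsMatching (update M a (some b)) := by
  intro a₁ a₂ c h₁ h₂
  by_cases h₁a : a₁ = a <;> by_cases h₂a : a₂ = a
  · rw [h₁a, h₂a]
  · rw [h₁a, update_self, Option.some_inj] at h₁
    rw [update_of_ne h₂a, ← h₁] at h₂
    exact absurd h₂ (hb a₂)
  · rw [h₂a, update_self, Option.some_inj] at h₂
    rw [update_of_ne h₁a, ← h₂] at h₁
    exact absurd h₁ (hb a₁)
  · rw [update_of_ne h₁a] at h₁
    rw [update_of_ne h₂a] at h₂
    exact hM _ _ _ h₁ h₂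

lemma morePopular_update_of_eq_none [Finite α] [DecidableEq α] {a : α} (ha : M a = none) (b : β) :
    MorePopular rank (update M a (some b)) M := by
  have hworse : {a' | Prefers rank M (update M a (some b)) a'} = ∅ := by
    ext a'
    rcases eq_or_ne a' a with rfl | h
    · simp [Prefers, ha]
    · simpa using not_prefers_of_eq (update_of_ne h _ _).symm
  rw [morePopular_iff_ncard, hworse, Set.ncard_empty, Set.ncard_pos]
  exact ⟨a, Or.inl ⟨b, by simp, ha⟩⟩

end General

section CommonRanking

variable {α : Type*} {n : ℕ}

def indexRank : α → Fin n → ℕ∞ := fun _ b => ((b : ℕ) : ℕ∞)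

def promote (b : Fin n) : Option (Fin n) :=
  if h : (b : ℕ) = 0 then none else some ⟨b - 1, by omega⟩

lemma promote_eq_some {b c : Fin n} : promote b = some c ↔ (b : ℕ) ≠ 0 ∧ (c : ℕ) = b - 1 := by
  unfold promote
  split_ifs with h <;> simp [h, Fin.ext_iff, eq_comm]

lemma IsMatching.bind_promote {M : α → Option (Fin n)} (hM : IsMatching M) :
    IsMatching fun a => (M a).bind promote := by
  intro a a' c h h'
  obtain ⟨b, hb, hbc⟩ := Option.bind_eq_some_iff.mp h
  obtain ⟨b', hb', hbc'⟩ := Option.bind_eq_some_iff.mp h'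
  rw [promote_eq_some] at hbc hbc'
  have : b = b' := Fin.ext (by omega)
  exact hM a a' b hb (this ▸ hb')

variable {M : α → Option (Fin n)} {a : α}

lemma prefers_bind_promote {b : Fin n} (hb : M a = some b) (hb0 : (b : ℕ) ≠ 0) :
    Prefers indexRank (fun a => (M a).bind promote) M a := by
  refine Or.inr ⟨⟨b - 1, by omega⟩, b, ?_, hb, ?_⟩
  · simp [hb, promote, hb0]
  · simp only [indexRank, Nat.cast_lt]
    omega

lemma holds_top_of_prefers_to_bind_promote
    (h : Prefers indexRank M (fun a => (M a).bind promote) a) :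
    ∃ b, M a = some b ∧ (b : ℕ) = 0 := by
  rcases h with ⟨b, hb, hnone⟩ | ⟨b, b', hb, hb', hlt⟩
  · refine ⟨b, hb, ?_⟩
    by_contra hb0
    simp [hb, promote, hb0] at hnone
  · dsimp only at hb'
    rw [hb, Option.bind_some, promote_eq_some] at hb'
    simp only [indexRank, Nat.cast_lt] at hlt
    omega

theorem morePopular_bind_promote [Finite α] (hα : 3 ≤ Nat.card α) (hM : IsMatching M)
    (hperfect : ∀ a, M a ≠ none) :
    MorePopular indexRank (fun a => (M a).bind promote) M := by
  set top := {a | ∃ b, M a = some b ∧ (b : ℕ) = 0}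
  have htop : top.ncard ≤ 1 := by
    rw [Set.ncard_le_one_iff]
    rintro a a' ⟨b, hb, hb0⟩ ⟨b', hb', hb0'⟩
    exact hM _ _ _ hb (Fin.ext (hb0.trans hb0'.symm) ▸ hb')
  have hworse : {a | Prefers indexRank M (fun a => (M a).bind promote) a}.ncard ≤ top.ncard :=
    Set.ncard_le_ncard fun _ => holds_top_of_prefers_to_bind_promote
  have hcover : Set.univ ⊆ {a | Prefers indexRank (fun a => (M a).bind promote) M a} ∪ top := by
    intro a _
    obtain ⟨b, hb⟩ := Option.ne_none_iff_exists'.mp (hperfect a)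
    by_cases hb0 : (b : ℕ) = 0
    · exact Or.inr ⟨b, hb, hb0⟩
    · exact Or.inl (prefers_bind_promote hb hb0)
  have hbetter := (Set.ncard_le_ncard hcover).trans (Set.ncard_union_le _ _)
  rw [Set.ncard_univ] at hbetter
  rw [morePopular_iff_ncard]
  omega

theorem exists_morePopular_of_indexRank [Finite α] (hα : 3 ≤ Nat.card α) (hn : Nat.card α ≤ n)
    (M : α → Option (Fin n)) (hM : IsMatching M) :
    ∃ M', IsMatching M' ∧ MorePopular indexRank M' M := by
  classical
  by_cases hunmatched : ∃ a, M a = none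
  · obtain ⟨a, ha⟩ := hunmatched
    obtain ⟨b, hb⟩ := exists_free_item_of_eq_none (by simpa using hn) ha
    exact ⟨_, hM.update_some a hb, morePopular_update_of_eq_none ha b⟩
  · exact ⟨_, hM.bind_promote, morePopular_bind_promote hα hM (not_exists.mp hunmatched)⟩

end CommonRanking

/-- No matching in this instance is popular: every matching is beaten by some matching. -/
theorem no_popular_matching_in_three_cycle_instance
    (M : Fin 3 → Option (Fin 3)) (hM : IsMatching M) :
    ∃ M' : Fin 3 → Option (Fin 3), IsMatching M' ∧ MorePopular rank3 M' M :=
  exists_morePopular_of_indexRank (by simp) (by simp) M hM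
end

section
/- The cyclic dominance among the three symmetric matchings: for the 3-person instance where each ai ranks b1 > b2 > b3, with M1 = {(a1,b1),(a2,b2),(a3,b3)}, M2 = {(a1,b3),(a2,b1),(a3,b2)}, M3 = {(a1,b2),(a2,b3),(a3,b1)}, we have M2 is more popular than M1, M3 is more popular than M2, and M1 is more popular than M3. -/
/-- M1 = {(a1,b1),(a2,b2),(a3,b3)} -/
def M1pm : Fin 3 → Option (Fin 3) := fun a => some a

/-- M2 = {(a1,b3),(a2,b1),(a3,b2)} -/
def M2pm : Fin 3 → Option (Fin 3) := fun a => some (a + 2)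

/-- M3 = {(a1,b2),(a2,b3),(a3,b1)} -/
def M3pm : Fin 3 → Option (Fin 3) := fun a => some (a + 1)

theorem prefers_some_iff {α β : Type*} {rank : α → β → ℕ∞} {f g : α → β} {a : α} :
    Prefers rank (fun a => some (f a)) (fun a => some (g a)) a ↔ rank a (f a) < rank a (g a) := by
  simp [Prefers]

namespace Fin

variable {n : ℕ}

theorem val_sub_one_lt_val_iff {b : Fin (n + 1)} :
    ((b - 1 : Fin (n + 1)) : ℕ) < b ↔ b ≠ 0 := by
  rw [coe_sub_one]
  split_ifs with hb
  · simp [hb]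
  · simpa [hb] using Fin.pos_iff_ne_zero.mpr hb

theorem val_lt_val_sub_one_iff (hn : n ≠ 0) {b : Fin (n + 1)} :
    (b : ℕ) < ((b - 1 : Fin (n + 1)) : ℕ) ↔ b = 0 := by
  rw [coe_sub_one]
  split_ifs with hb
  · simpa [hb] using Nat.pos_of_ne_zero hn
  · simp [hb]

end Fin

theorem morePopular_sub_one {α : Type*} {n : ℕ} (hn : 2 ≤ n) (f : α ≃ Fin (n + 1)) :
    MorePopular (fun _ (b : Fin (n + 1)) => ((b : ℕ) : ℕ∞)) (fun a => some (f a - 1))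
      (fun a => some (f a)) := by
  have losers : Nat.card {a // f a = 0} = 1 := by
    rw [Nat.card_congr (f.subtypeEquiv (q := (· = 0)) fun _ => Iff.rfl), Nat.card_unique]
  have winners : Nat.card {a // f a ≠ 0} = n := by
    rw [Nat.card_congr (f.subtypeEquiv (q := (· ≠ 0)) fun _ => Iff.rfl),
      Nat.card_eq_fintype_card, Fintype.card_subtype_compl, Fintype.card_fin]
    simp
  simp only [MorePopular, prefers_some_iff, Nat.cast_lt, Fin.val_sub_one_lt_val_iff,
    Fin.val_lt_val_sub_one_iff (show n ≠ 0 by omega), losers, winners]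
  omega

/-- Cyclic dominance: M2 ≻ M1, M3 ≻ M2, M1 ≻ M3. -/
theorem cyclic_dominance :
    MorePopular rank3 M2pm M1pm ∧ MorePopular rank3 M3pm M2pm ∧
      MorePopular rank3 M1pm M3pm := by
  have hM2 : M2pm = fun a => some (a - 1) := by decide
  have hM3 : M3pm = fun a => some (a + 2 - 1) := by decide
  have hM1 : M1pm = fun a => some (a + 1 - 1) := by decide
  refine ⟨?_, ?_, ?_⟩
  · rw [hM2]; exact morePopular_sub_one le_rfl (Equiv.refl _)
  · rw [hM3]; exact morePopular_sub_one le_rfl (Equiv.addRight 2)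
  · rw [hM1]; exact morePopular_sub_one le_rfl (Equiv.addRight 1)
end
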